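/- arXiv:1405.0205 — 3 statements merged into one kernel-verified Lean document; each statement's English description precedes it below -/
import Mathlib

section
/- Let l ≥ 1 and N ≥ 1 be natural numbers, and consider N independent random variables X_1, …, X_N each uniformly distributed on Fin l, modeled by the product of N copies of the uniform probability measure on Fin l. Then the expected cardinality of the random set {i : Fin l | ∃ j, X_j = i} (i.e., the expected Hamming weight of the resulting Bloom filter) equals l · (1 − (1 − 1/l)^N). -/
open MeasureTheory
open scoped ENNReal

lemma bloom_sum_card (l N : ℕ) (hl : 1 ≤ l) :
    ∑ f : Fin N → Fin l,
      (Finset.univ.filter fun i : Fin l => ∃ j, f j = i).card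
      = l * (l ^ N - (l - 1) ^ N) := by
  have key : ∀ i : Fin l,
      (Finset.univ.filter fun f : Fin N → Fin l => ∃ j, f j = i).card
        = l ^ N - (l - 1) ^ N := by
    intro i
    have hcomp : (Finset.univ.filter fun f : Fin N → Fin l => ¬ ∃ j, f j = i).card
        = (l - 1) ^ N := by
      have : (Finset.univ.filter fun f : Fin N → Fin l => ¬ ∃ j, f j = i)
          = Fintype.piFinset (fun _ : Fin N => Finset.univ.erase i) := by
        ext f
        simp [Fintype.mem_piFinset, Finset.mem_erase]
      rw [this, Fintype.card_piFinset]
      simp [Finset.card_erase_of_mem]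
    have hadd := Finset.card_filter_add_card_filter_not
      (s := (Finset.univ : Finset (Fin N → Fin l)))
      (fun f : Fin N → Fin l => ∃ j, f j = i)
    have huniv : (Finset.univ : Finset (Fin N → Fin l)).card = l ^ N := by
      simp [Finset.card_univ]
    have hle : (l - 1) ^ N ≤ l ^ N := Nat.pow_le_pow_left (Nat.sub_le l 1) N
    rw [hcomp, huniv] at hadd
    exact Nat.eq_sub_of_add_eq hadd
  calc ∑ f : Fin N → Fin l,
        (Finset.univ.filter fun i : Fin l => ∃ j, f j = i).card
      = ∑ f : Fin N → Fin l, ∑ i : Fin l, (if ∃ j, f j = i then 1 else 0) := by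
        simp only [Finset.card_filter]
    _ = ∑ i : Fin l, ∑ f : Fin N → Fin l, (if ∃ j, f j = i then 1 else 0) :=
        Finset.sum_comm
    _ = ∑ i : Fin l, (Finset.univ.filter fun f : Fin N → Fin l => ∃ j, f j = i).card := by
        simp only [Finset.card_filter]
    _ = l * (l ^ N - (l - 1) ^ N) := by
        simp [key]

/-- For `N` independent uniform random variables on `Fin l` (the product of `N`
copies of the uniform probability measure `(l : ℝ≥0∞)⁻¹ • Measure.count` on `Fin l`),
the expected cardinality of the set of hit positions (the expected Hamming weight of
the resulting Bloom filter) equals `l * (1 - (1 - 1/l)^N)`. -/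
theorem expected_bloom_weight (l N : ℕ) (hl : 1 ≤ l) (hN : 1 ≤ N) :
    ∫ f : Fin N → Fin l,
        ((Finset.univ.filter fun i : Fin l => ∃ j, f j = i).card : ℝ)
        ∂(Measure.pi (fun _ : Fin N => ((l : ℝ≥0∞)⁻¹ • Measure.count : Measure (Fin l))))
      = l * (1 - (1 - 1/(l : ℝ))^N) := by
  have hl0 : (l : ℝ≥0∞) ≠ 0 := by
    exact_mod_cast Nat.one_le_iff_ne_zero.mp hl
  have hlR : (0 : ℝ) < l := by exact_mod_cast hl
  set ν : Measure (Fin l) := (l : ℝ≥0∞)⁻¹ • Measure.count with hν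
  haveI : IsProbabilityMeasure ν := by
    constructor
    rw [hν]
    simp [Measure.count_univ, ENNReal.inv_mul_cancel hl0]
  set μ : Measure (Fin N → Fin l) := Measure.pi (fun _ : Fin N => ν) with hμ
  have hsing : ∀ f : Fin N → Fin l, μ {f} = ((l : ℝ≥0∞)⁻¹) ^ N := by
    intro f
    rw [hμ, ← Set.univ_pi_singleton f, Measure.pi_pi]
    simp [hν, Measure.count_singleton]
  rw [integral_fintype (Integrable.of_finite)]
  simp only [Measure.real]
  have : ∀ f : Fin N → Fin l,
      (μ {f}).toReal = ((l : ℝ)⁻¹) ^ N := by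
    intro f
    rw [hsing f]
    simp
  simp only [this, smul_eq_mul]
  rw [← Finset.mul_sum]
  have hcast : ∑ f : Fin N → Fin l,
      ((Finset.univ.filter fun i : Fin l => ∃ j, f j = i).card : ℝ)
      = ((l * (l ^ N - (l - 1) ^ N) : ℕ) : ℝ) := by
    rw [← bloom_sum_card l N hl]
    push_cast
    rfl
  rw [hcast]
  have hle : (l - 1) ^ N ≤ l ^ N := Nat.pow_le_pow_left (Nat.sub_le l 1) N
  rw [Nat.cast_mul, Nat.cast_sub hle]
  push_cast [Nat.cast_sub hl]
  have h1 : (1 : ℝ) - 1 / l = ((l : ℝ) - 1) / l := by field_simp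
  rw [h1, div_pow]
  field_simp
  rw [one_div_pow, one_div_mul_cancel (pow_ne_zero _ hlR.ne'), one_mul]
end

section
/- Let A be a type, n and q natural numbers with 1 ≤ q ≤ n, and s, s' : Fin n → A two strings of length n. Suppose there are j and u ≥ 1 such that s and s' agree at every position outside the interval {j, j+1, …, j+u−1}. Then the number of start indices i with 0 ≤ i ≤ n − q such that the positional q-grams of s and s' at i differ is at most q + u − 1. -/
/-- The positional `q`-gram of the string `s : Fin n → A` starting at position
`i : Fin (n - q + 1)`, i.e. the tuple `(s i, s (i+1), …, s (i+q-1))`. -/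
def posGram {A : Type*} {n q : ℕ} (hq1 : 1 ≤ q) (hqn : q ≤ n)
    (s : Fin n → A) (i : Fin (n - q + 1)) : Fin q → A :=
  fun t => s ⟨(i : ℕ) + (t : ℕ), by
    have h1 := i.isLt
    have h2 := t.isLt
    omega⟩

/-- If two strings of length `n` agree everywhere outside a block of `u ≥ 1`
consecutive positions `{j, …, j+u-1}`, then at most `q + u - 1` of their
positional `q`-grams differ. -/
theorem consecutive_changes_affect_few_grams {A : Type*} [DecidableEq A]
    {n q : ℕ} (hq1 : 1 ≤ q) (hqn : q ≤ n)
    (s s' : Fin n → A) (j u : ℕ) (hu : 1 ≤ u)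
    (hagree : ∀ p : Fin n, ((p : ℕ) < j ∨ j + u ≤ (p : ℕ)) → s p = s' p) :
    (Finset.univ.filter fun i : Fin (n - q + 1) =>
        posGram hq1 hqn s i ≠ posGram hq1 hqn s' i).card ≤ q + u - 1 := by
  classical
  have key : ∀ i : Fin (n - q + 1), posGram hq1 hqn s i ≠ posGram hq1 hqn s' i →
      (i : ℕ) ∈ Finset.Ico (j + 1 - q) (j + u) := by
    intro i hi
    have : ∃ t : Fin q, posGram hq1 hqn s i t ≠ posGram hq1 hqn s' i t := by
      by_contra h
      push_neg at h
      exact hi (funext h)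
    obtain ⟨t, ht⟩ := this
    have hne : s ⟨(i : ℕ) + (t : ℕ), by have := i.isLt; have := t.isLt; omega⟩ ≠
        s' ⟨(i : ℕ) + (t : ℕ), by have := i.isLt; have := t.isLt; omega⟩ := ht
    have hrange : ¬(((i : ℕ) + (t : ℕ)) < j ∨ j + u ≤ (i : ℕ) + (t : ℕ)) := by
      intro h
      exact hne (hagree _ h)
    push_neg at hrange
    have := t.isLt
    simp only [Finset.mem_Ico]
    omega
  calc (Finset.univ.filter fun i : Fin (n - q + 1) =>
        posGram hq1 hqn s i ≠ posGram hq1 hqn s' i).card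
      ≤ (Finset.Ico (j + 1 - q) (j + u)).card := by
        refine Finset.card_le_card_of_injOn (fun i => (i : ℕ)) ?_ ?_
        · intro i hi
          exact key i (Finset.mem_filter.mp hi).2
        · intro a _ b _ hab
          exact Fin.val_injective hab
    _ ≤ q + u - 1 := by rw [Nat.card_Ico]; omega
end

section
/- Let A be a type, n and q natural numbers with 1 ≤ q ≤ n, and s, s' : Fin n → A two strings of length n that differ at exactly the u positions p_1 < p_2 < … < p_u, where consecutive differing positions satisfy p_{t+1} − p_t ≥ q, and where q − 1 ≤ p_1 and p_u ≤ n − q. Then the number of start indices i with 0 ≤ i ≤ n − q such that the positional q-grams of s and s' at i differ is exactly q · u. -/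
/-- If two strings of length `n` differ at exactly the `u` positions
`p 0 < p 1 < … < p (u-1)`, where consecutive differing positions are at least `q`
apart and each differing position `pt` satisfies `q - 1 ≤ pt` and `pt + q ≤ n`
(i.e. `pt ≤ n - q`), then exactly `q * u` of their positional `q`-grams differ. -/
theorem isolated_changes_affect_qu_grams {A : Type*} [DecidableEq A]
    {n q : ℕ} (hq1 : 1 ≤ q) (hqn : q ≤ n)
    (s s' : Fin n → A) (u : ℕ) (p : Fin u → Fin n)
    (hmono : StrictMono p)
    (hdiff : ∀ x : Fin n, s x ≠ s' x ↔ ∃ t : Fin u, p t = x)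
    (hgap : ∀ (t : Fin u) (ht : (t : ℕ) + 1 < u),
      ((p t : ℕ)) + q ≤ (p ⟨(t : ℕ) + 1, ht⟩ : ℕ))
    (hbound : ∀ t : Fin u, q - 1 ≤ (p t : ℕ) ∧ (p t : ℕ) + q ≤ n) :
    (Finset.univ.filter fun i : Fin (n - q + 1) =>
        posGram hq1 hqn s i ≠ posGram hq1 hqn s' i).card = q * u := by
  classical
  -- gap between any two (not just consecutive) change positions
  have hgap' : ∀ t t' : Fin u, t < t' → (p t : ℕ) + q ≤ (p t' : ℕ) := by
    intro t t' htt
    have ht1 : (t : ℕ) + 1 < u := by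
      have := t'.isLt
      have : (t : ℕ) < (t' : ℕ) := htt
      omega
    have h1 := hgap t ht1
    have h2 : p ⟨(t : ℕ) + 1, ht1⟩ ≤ p t' := by
      apply hmono.monotone
      show (t : ℕ) + 1 ≤ (t' : ℕ)
      have : (t : ℕ) < (t' : ℕ) := htt
      omega
    have h2' : (p ⟨(t : ℕ) + 1, ht1⟩ : ℕ) ≤ (p t' : ℕ) := h2
    omega
  -- characterization of differing grams
  have key : ∀ i : Fin (n - q + 1),
      (posGram hq1 hqn s i ≠ posGram hq1 hqn s' i) ↔
        ∃ t : Fin u, (p t : ℕ) + 1 ≤ (i : ℕ) + q ∧ (i : ℕ) ≤ (p t : ℕ) := by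
    intro i
    constructor
    · intro h
      rw [Function.ne_iff] at h
      obtain ⟨a, ha⟩ := h
      have ha' : s ⟨(i : ℕ) + (a : ℕ), by have := i.isLt; have := a.isLt; omega⟩ ≠
          s' ⟨(i : ℕ) + (a : ℕ), by have := i.isLt; have := a.isLt; omega⟩ := ha
      obtain ⟨t, hpt⟩ := (hdiff _).mp ha'
      have hpt' : (p t : ℕ) = (i : ℕ) + (a : ℕ) := by
        rw [hpt]
      have := a.isLt
      exact ⟨t, by omega, by omega⟩
    · rintro ⟨t, h1, h2⟩ heq
      have hne := (hdiff (p t)).mpr ⟨t, rfl⟩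
      have := congrFun heq ⟨(p t : ℕ) - (i : ℕ), by omega⟩
      have heq' : s ⟨(i : ℕ) + ((p t : ℕ) - (i : ℕ)), by
          have := i.isLt; have := (hbound t).2; omega⟩ =
        s' ⟨(i : ℕ) + ((p t : ℕ) - (i : ℕ)), by
          have := i.isLt; have := (hbound t).2; omega⟩ := this
      apply hne
      have hx : (⟨(i : ℕ) + ((p t : ℕ) - (i : ℕ)), by
          have := i.isLt; have := (hbound t).2; omega⟩ : Fin n) = p t := by
        apply Fin.ext
        simp only
        omega
      rwa [hx] at heq'
  have hcard : q * u = (Finset.univ : Finset (Fin u × Fin q)).card := by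
    simp [mul_comm]
  rw [hcard]
  symm
  apply Finset.card_bij
    (fun (tk : Fin u × Fin q) _ =>
      (⟨(p tk.1 : ℕ) + 1 + (tk.2 : ℕ) - q, by
        have h1 := (hbound tk.1).1
        have h2 := (hbound tk.1).2
        have h3 := tk.2.isLt
        omega⟩ : Fin (n - q + 1)))
  · rintro ⟨t, k⟩ -
    rw [Finset.mem_filter]
    refine ⟨Finset.mem_univ _, ?_⟩
    rw [key]
    refine ⟨t, ?_, ?_⟩ <;>
      · simp only
        have h1 := (hbound t).1
        have h3 := k.isLt
        omega
  · rintro ⟨t, k⟩ - ⟨t', k'⟩ - h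
    have hval : (p t : ℕ) + 1 + (k : ℕ) - q = (p t' : ℕ) + 1 + (k' : ℕ) - q :=
      congrArg Fin.val h
    have h1 := (hbound t).1
    have h1' := (hbound t').1
    have h3 := k.isLt
    have h3' := k'.isLt
    rcases lt_trichotomy t t' with hlt | heq | hgt
    · exact absurd hval (by have := hgap' t t' hlt; omega)
    · subst heq
      have : (k : ℕ) = (k' : ℕ) := by omega
      simp [Fin.ext this]
    · exact absurd hval (by have := hgap' t' t hgt; omega)
  · intro i hi
    rw [Finset.mem_filter] at hi
    obtain ⟨t, h1, h2⟩ := (key i).mp hi.2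
    refine ⟨(t, ⟨(i : ℕ) + q - 1 - (p t : ℕ), by omega⟩), Finset.mem_univ _, ?_⟩
    apply Fin.ext
    simp only
    omega
end
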